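/- Let n ≥ 1, m = |n|, and let x_1,…,x_n ∈ {0,1}. Then there exists a unique vector (z_1,…,z_m) ∈ ℝ^m such that for every q = 0,1,…,m−1 the vector (x_1,…,x_n, 1^{(2^q)}, z_1^{(1)}, z_2^{(2)}, …, z_q^{(2^{q−1})}, 1−z_{q+1}) of length n+2^{q+1} lies in PP(n+2^{q+1}, q). Moreover, in this solution z_k ∈ {0,1} for all k, and Σ_{k=1}^n x_k = Σ_{k=1}^m (1−z_k)·2^{k−1}; that is, z_1,…,z_m are the flips of the bits of the binary representation of Σ_{k=1}^n x_k, from least to most significant. -/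

import Mathlib

/-- The truncated parity polytope `PP(n,q)`: the convex hull of the 0/1 vectors of
length `n` with `⌊2^{-q} Σ x_k⌋` odd. -/
def truncParityPolytope (n q : ℕ) : Set (Fin n → ℝ) :=
  convexHull ℝ
    {x : Fin n → ℝ |
      (∀ k, x k = 0 ∨ x k = 1) ∧ ∃ s : ℕ, (∑ k, x k) = (s : ℝ) ∧ Odd (s / 2 ^ q)}

/-- The vector `(x_1,…,x_n, 1^{(2^q)}, z_1^{(1)}, z_2^{(2)}, …, z_q^{(2^{q-1})},
1 - z_{q+1})` of length `n + 2^{q+1}`.  Here `z : ℕ → ℝ` is 0-indexed, so `z_k` is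
`z (k-1)`.  Positions `< n` hold the `x`'s, the next `2^q` positions hold `1`, the last
position holds `1 - z_{q+1}`, and a position with offset `p` into the `z`-region (so
`p ∈ {0,…,2^q-2}`) holds `z_k` where `k = Nat.size (p+1)` (i.e. `z_1` once, `z_2`
twice, …, `z_q` repeated `2^{q-1}` times). -/
noncomputable def bitGadget (n q : ℕ) (x : Fin n → ℝ) (z : ℕ → ℝ) :
    Fin (n + 2 ^ (q + 1)) → ℝ := fun j =>
  if h : (j : ℕ) < n then x ⟨j, h⟩
  else if (j : ℕ) < n + 2 ^ q then 1
  else if (j : ℕ) = n + 2 ^ (q + 1) - 1 then 1 - z q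
  else z (Nat.size ((j : ℕ) - (n + 2 ^ q) + 1) - 1)

/-! Write `s = ∑ x_k`. If `z_1, …, z_q` are the flipped bits of `s`, the `q`-th gadget
vector has coordinate sum `2^q (⌊s / 2^q⌋ + 1) + (2^q - 1) + (1 - z_{q+1})`, so of its two
0/1 completions exactly the one whose last entry is bit `q` of `s` has odd truncated parity.
A point of the convex hull of 0/1 vectors that agrees with a 0/1 vector `w` outside the hull's
vertex set in all coordinates but one must take the opposite value there, because the
`ℓ¹`-distance to `w` is affine on the cube and at least `1` at every vertex. By induction on
`q` the `z_k` are therefore forced to be the flipped bits of `s`, and the flipped bits do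
satisfy all the constraints. -/

open Finset

section BinaryConvexHull

variable {ι : Type*} {S : Set (ι → ℝ)} {p w : ι → ℝ}

theorem apply_mem_Icc_of_mem_convexHull (hS : ∀ u ∈ S, ∀ j, u j ∈ Set.Icc (0 : ℝ) 1)
    (hp : p ∈ convexHull ℝ S) (j : ι) : p j ∈ Set.Icc 0 1 :=
  convexHull_min (t := Set.univ.pi fun _ => Set.Icc 0 1) (fun u hu j _ => hS u hu j)
    (convex_pi fun _ _ => convex_Icc 0 1) hp j (Set.mem_univ j)

-- On `[0, 1]`, `(1 - 2 w_j) (y_j - w_j) = |y_j - w_j|`: the sum is the `ℓ¹`-distance to `w`,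
-- written as an affine function of `y`.
theorem one_le_sum_mul_sub_of_mem_convexHull [Fintype ι]
    (hS : ∀ u ∈ S, ∀ j, u j = 0 ∨ u j = 1)
    (hw : ∀ j, w j = 0 ∨ w j = 1) (hwS : w ∉ S) (hp : p ∈ convexHull ℝ S) :
    1 ≤ ∑ j, (1 - 2 * w j) * (p j - w j) := by
  have hlin : IsLinearMap ℝ fun y : ι → ℝ => ∑ j, (1 - 2 * w j) * y j :=
    ⟨fun a b => by simp only [Pi.add_apply, mul_add, sum_add_distrib],
      fun c a => by simp only [Pi.smul_apply, smul_eq_mul, mul_sum, mul_left_comm]⟩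
  have hconv : Convex ℝ {y : ι → ℝ | 1 ≤ ∑ j, (1 - 2 * w j) * (y j - w j)} := by
    simpa only [mul_sub, sum_sub_distrib, le_sub_iff_add_le]
      using convex_halfSpace_ge hlin (1 + ∑ j, (1 - 2 * w j) * w j)
  refine convexHull_min (fun u hu => ?_) hconv hp
  obtain ⟨i, hi⟩ : ∃ i, u i ≠ w i := by
    by_contra! h
    exact hwS (funext h ▸ hu)
  have hterm : ∀ j, 0 ≤ (1 - 2 * w j) * (u j - w j) := fun j => by
    rcases hw j with h | h <;> rcases hS u hu j with h' | h' <;> rw [h, h'] <;> norm_num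
  have hi1 : (1 - 2 * w i) * (u i - w i) = 1 := by
    rcases hw i with h | h <;> rcases hS u hu i with h' | h' <;> simp_all; norm_num
  have hle := single_le_sum (fun j _ => hterm j) (mem_univ i)
  rwa [hi1] at hle

theorem apply_eq_one_sub_of_mem_convexHull [Fintype ι]
    (hS : ∀ u ∈ S, ∀ j, u j = 0 ∨ u j = 1)
    (hw : ∀ j, w j = 0 ∨ w j = 1) (hwS : w ∉ S) (hp : p ∈ convexHull ℝ S) {i : ι}
    (hpw : ∀ j ≠ i, p j = w j) : p i = 1 - w i := by
  have hdist := one_le_sum_mul_sub_of_mem_convexHull hS hw hwS hp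
  rw [sum_eq_single i (fun j _ hj => by rw [hpw j hj, sub_self, mul_zero]) (by simp)] at hdist
  have hbox := apply_mem_Icc_of_mem_convexHull
    (fun u hu j => by rcases hS u hu j with h | h <;> simp [h]) hp i
  rcases hw i with h | h <;> rw [h] at hdist ⊢ <;> linarith [hbox.1, hbox.2]

end BinaryConvexHull

theorem exists_sum_eq_natCast_le_card {ι : Type*} [Fintype ι] {x : ι → ℝ}
    (hx : ∀ k, x k = 0 ∨ x k = 1) : ∃ s : ℕ, ∑ k, x k = s ∧ s ≤ Fintype.card ι := by
  classical
  refine ⟨#{k | x k = 1}, ?_, card_le_univ _⟩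
  rw [← sum_boole]
  exact sum_congr rfl fun k _ => by rcases hx k with h | h <;> simp [h]

theorem sum_range_two_pow_sub_one_size {M : Type*} [AddCommMonoid M] (f : ℕ → M) (q : ℕ) :
    ∑ p ∈ range (2 ^ q - 1), f ((p + 1).size - 1) = ∑ k ∈ range q, 2 ^ k • f k := by
  induction q with
  | zero => simp
  | succ q ih =>
    have hsplit : 2 ^ (q + 1) - 1 = (2 ^ q - 1) + 2 ^ q := by
      have := Nat.one_le_two_pow (n := q); rw [pow_succ]; omega
    have hsize : ∀ j ∈ range (2 ^ q), f ((2 ^ q - 1 + j + 1).size - 1) = f q := by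
      intro j hj
      have hj := mem_range.1 hj
      have hle : (2 ^ q - 1 + j + 1).size ≤ q + 1 := by
        rw [Nat.size_le, pow_succ]; omega
      have hlt : q < (2 ^ q - 1 + j + 1).size := by
        rw [Nat.lt_size]; omega
      rw [show (2 ^ q - 1 + j + 1).size = q + 1 by omega, Nat.add_sub_cancel]
    rw [hsplit, sum_range_add, ih, sum_range_succ, sum_congr rfl hsize, sum_const, card_range]

theorem sum_two_pow_mul_toNat_testBit (s q : ℕ) :
    ∑ k ∈ range q, 2 ^ k * (s.testBit k).toNat = s % 2 ^ q := by
  induction q with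
  | zero => simp [Nat.mod_one]
  | succ q ih => rw [sum_range_succ, ih, Nat.toNat_testBit, Nat.mod_pow_succ]

theorem odd_div_two_pow_iff (s q : ℕ) (c : Bool) :
    Odd ((2 ^ q * (s / 2 ^ q + 1) + (2 ^ q - 1) + c.toNat) / 2 ^ q) ↔ c = s.testBit q := by
  have hpos := Nat.one_le_two_pow (n := q)
  rw [Nat.testBit_eq_decide_div_mod_eq, Nat.odd_iff]
  cases c
  · rw [Bool.toNat_false, add_zero, add_comm, Nat.add_mul_div_left _ _ hpos,
      Nat.div_eq_of_lt (by omega)]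
    simp only [false_eq_decide_iff]
    omega
  · have hnum : 2 ^ q * (s / 2 ^ q + 1) + (2 ^ q - 1) + 1 = 2 ^ q * (s / 2 ^ q + 2) := by
      ring_nf; omega
    rw [Bool.toNat_true, hnum, Nat.mul_div_cancel_left _ hpos]
    simp only [true_eq_decide_iff]
    omega

-- The paper's `z_k` is `flippedBit s (k - 1)`.
def flippedBit (s k : ℕ) : ℝ := 1 - (s.testBit k).toNat

theorem flippedBit_eq_zero_or_one (s k : ℕ) : flippedBit s k = 0 ∨ flippedBit s k = 1 := by
  unfold flippedBit
  cases s.testBit k <;> simp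

theorem sum_two_pow_mul_flippedBit (s q : ℕ) :
    ∑ k ∈ range q, (2 : ℝ) ^ k * flippedBit s k = 2 ^ q - 1 - ((s % 2 ^ q : ℕ) : ℝ) := by
  have hbits : ∑ k ∈ range q, (2 : ℝ) ^ k * (s.testBit k).toNat = ((s % 2 ^ q : ℕ) : ℝ) :=
    by exact_mod_cast congrArg (Nat.cast (R := ℝ)) (sum_two_pow_mul_toNat_testBit s q)
  simp only [flippedBit, mul_sub, mul_one, sum_sub_distrib, hbits]
  rw [geom_sum_eq (by norm_num : (2 : ℝ) ≠ 1)]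
  norm_num

theorem sum_fin_one_sub_flippedBit_mul_two_pow {s m : ℕ} (hs : s < 2 ^ m) :
    ∑ k : Fin m, (1 - flippedBit s k) * 2 ^ (k : ℕ) = s := by
  have hbits := sum_two_pow_mul_toNat_testBit s m
  rw [Nat.mod_eq_of_lt hs] at hbits
  rw [Fin.sum_univ_eq_sum_range (fun k => (1 - flippedBit s k) * 2 ^ k)]
  conv_rhs => rw [← hbits]
  push_cast
  simp only [flippedBit, sub_sub_cancel, mul_comm]

-- `truncParityPolytope N q` is, by definition, the convex hull of this set.
def truncParityVertices (N q : ℕ) : Set (Fin N → ℝ) :=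
  {x | (∀ k, x k = 0 ∨ x k = 1) ∧ ∃ s : ℕ, (∑ k, x k) = (s : ℝ) ∧ Odd (s / 2 ^ q)}

section Gadget

variable {n q s : ℕ} {x : Fin n → ℝ} {z : ℕ → ℝ}

theorem size_sub_add_one_sub_one_lt {j : ℕ} (hlo : n + 2 ^ q ≤ j)
    (hhi : j + 1 < n + 2 ^ (q + 1)) : (j - (n + 2 ^ q) + 1).size - 1 < q := by
  have : (j - (n + 2 ^ q) + 1).size ≤ q := by
    rw [Nat.size_le]
    rw [pow_succ] at hhi
    omega
  have : 0 < (j - (n + 2 ^ q) + 1).size := Nat.size_pos.2 (Nat.succ_pos _)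
  omega

theorem bitGadget_congr {z' : ℕ → ℝ} (hzz' : ∀ k < q, z k = z' k)
    (j : Fin (n + 2 ^ (q + 1))) (hj : (j : ℕ) ≠ n + 2 ^ (q + 1) - 1) :
    bitGadget n q x z j = bitGadget n q x z' j := by
  unfold bitGadget
  split_ifs with h₁ h₂
  · rfl
  · rfl
  · exact hzz' _ (size_sub_add_one_sub_one_lt (by omega) (by omega))

theorem bitGadget_of_eq_last (j : Fin (n + 2 ^ (q + 1))) (hj : (j : ℕ) = n + 2 ^ (q + 1) - 1) :
    bitGadget n q x z j = 1 - z q := by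
  have : 2 ^ q < 2 ^ (q + 1) := Nat.pow_lt_pow_succ one_lt_two
  simp only [bitGadget]
  rw [dif_neg (by omega), if_neg (by omega), if_pos hj]

theorem bitGadget_eq_zero_or_one (hx : ∀ k, x k = 0 ∨ x k = 1)
    (hz : ∀ k < q, z k = 0 ∨ z k = 1) (hzq : z q = 0 ∨ z q = 1) (j : Fin (n + 2 ^ (q + 1))) :
    bitGadget n q x z j = 0 ∨ bitGadget n q x z j = 1 := by
  by_cases hj : (j : ℕ) = n + 2 ^ (q + 1) - 1
  · rw [bitGadget_of_eq_last j hj]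
    rcases hzq with h | h <;> simp [h]
  unfold bitGadget
  split_ifs with h₁ h₂
  · exact hx _
  · exact Or.inr rfl
  · exact hz _ (size_sub_add_one_sub_one_lt (by omega) (by omega))

theorem sum_bitGadget :
    ∑ j, bitGadget n q x z j =
      ∑ k, x k + 2 ^ q + ∑ k ∈ range q, 2 ^ k * z k + (1 - z q) := by
  have hpos := Nat.one_le_two_pow (n := q)
  have h2q : 2 ^ (q + 1) = 2 ^ q + (2 ^ q - 1) + 1 := by rw [pow_succ]; omega
  let g : ℕ → ℝ := fun i => if i < 2 ^ q then 1 else if i = 2 ^ (q + 1) - 1 then 1 - z q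
    else z ((i - 2 ^ q + 1).size - 1)
  have hnatAdd : ∀ i, bitGadget n q x z (Fin.natAdd n i) = g i := fun i => by
    simp only [bitGadget, g, Fin.val_natAdd, Nat.add_sub_add_left]
    split_ifs <;> first | rfl | omega
  have hones : ∑ i ∈ range (2 ^ q), g i = 2 ^ q := by
    rw [sum_congr rfl fun i hi => if_pos (mem_range.1 hi)]
    simp
  have hz : ∑ i ∈ range (2 ^ q - 1), g (2 ^ q + i) = ∑ k ∈ range q, 2 ^ k * z k := by
    have h := sum_range_two_pow_sub_one_size z q
    simp only [nsmul_eq_mul, Nat.cast_pow, Nat.cast_ofNat] at h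
    rw [← h]
    refine sum_congr rfl fun i hi => ?_
    have hi := mem_range.1 hi
    simp only [g]
    rw [if_neg (by omega), if_neg (by omega), Nat.add_sub_cancel_left]
  have hlast : g (2 ^ q + (2 ^ q - 1)) = 1 - z q := by
    simp only [g]
    rw [if_neg (by omega), if_pos (by omega)]
  rw [Fin.sum_univ_add, add_assoc, add_assoc]
  congr 1
  · exact sum_congr rfl fun k _ => dif_pos k.isLt
  rw [sum_congr rfl fun i _ => hnatAdd i, Fin.sum_univ_eq_sum_range g, h2q, sum_range_succ,
    sum_range_add, hones, hz, hlast, add_assoc]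

theorem sum_bitGadget_of_flippedBit (hxs : ∑ k, x k = s)
    (hz : ∀ k < q, z k = flippedBit s k) :
    ∑ j, bitGadget n q x z j =
      ((2 ^ q * (s / 2 ^ q + 1) + (2 ^ q - 1) : ℕ) : ℝ) + (1 - z q) := by
  have hpos := Nat.one_le_two_pow (n := q)
  have hdm : (s : ℝ) = 2 ^ q * ((s / 2 ^ q : ℕ) : ℝ) + ((s % 2 ^ q : ℕ) : ℝ) := by
    exact_mod_cast (Nat.div_add_mod s (2 ^ q)).symm
  have hzsum : ∑ k ∈ range q, (2 : ℝ) ^ k * z k = ∑ k ∈ range q, 2 ^ k * flippedBit s k :=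
    sum_congr rfl fun k hk => by rw [hz k (mem_range.1 hk)]
  rw [sum_bitGadget, hzsum, sum_two_pow_mul_flippedBit, hxs, hdm]
  push_cast [Nat.cast_sub hpos]
  ring

theorem bitGadget_mem_truncParityVertices_iff (hx : ∀ k, x k = 0 ∨ x k = 1)
    (hxs : ∑ k, x k = s) (hz : ∀ k < q, z k = flippedBit s k) {c : Bool}
    (hzq : z q = 1 - c.toNat) :
    bitGadget n q x z ∈ truncParityVertices (n + 2 ^ (q + 1)) q ↔ c = s.testBit q := by
  have hbin := bitGadget_eq_zero_or_one hx (fun k hk => hz k hk ▸ flippedBit_eq_zero_or_one s k)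
    (by rw [hzq]; cases c <;> simp)
  have hsum : ∑ j, bitGadget n q x z j =
      ((2 ^ q * (s / 2 ^ q + 1) + (2 ^ q - 1) + c.toNat : ℕ) : ℝ) := by
    rw [sum_bitGadget_of_flippedBit hxs hz, hzq]
    push_cast
    ring
  simp only [truncParityVertices, Set.mem_ofPred_eq, hsum, Nat.cast_inj, exists_eq_left', hbin,
    implies_true, true_and]
  exact odd_div_two_pow_iff s q c

theorem bitGadget_mem_truncParityPolytope_iff (hx : ∀ k, x k = 0 ∨ x k = 1)
    (hxs : ∑ k, x k = s) (hz : ∀ k < q, z k = flippedBit s k) :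
    bitGadget n q x z ∈ truncParityPolytope (n + 2 ^ (q + 1)) q ↔ z q = flippedBit s q := by
  refine ⟨fun hp => ?_, fun hzq => subset_convexHull ℝ _
    ((bitGadget_mem_truncParityVertices_iff hx hxs hz hzq).2 rfl)⟩
  -- `z'` changes only the last gadget entry, to the value of the wrong parity.
  set z' := Function.update z q ((s.testBit q).toNat : ℝ)
  have hzz' : ∀ k < q, z k = z' k := fun k hk => (Function.update_of_ne hk.ne _ _).symm
  have hz' : ∀ k < q, z' k = flippedBit s k := fun k hk => (hzz' k hk).symm.trans (hz k hk)
  have hz'q : z' q = 1 - (!s.testBit q).toNat := by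
    simp only [z', Function.update_self]
    cases s.testBit q <;> simp
  have hw := bitGadget_eq_zero_or_one hx (fun k hk => hz' k hk ▸ flippedBit_eq_zero_or_one s k)
    (by rw [hz'q]; cases s.testBit q <;> simp)
  have hwS : bitGadget n q x z' ∉ truncParityVertices (n + 2 ^ (q + 1)) q := by
    rw [bitGadget_mem_truncParityVertices_iff hx hxs hz' hz'q]
    simp
  have hlast := apply_eq_one_sub_of_mem_convexHull (fun u hu => hu.1) hw hwS hp
    (i := ⟨n + 2 ^ (q + 1) - 1, Nat.sub_lt (by positivity) one_pos⟩)
    fun j hj => bitGadget_congr hzz' j fun h => hj (Fin.ext h)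
  rw [bitGadget_of_eq_last _ rfl, bitGadget_of_eq_last _ rfl, hz'q] at hlast
  rw [flippedBit, show z q = (!s.testBit q).toNat by linarith]
  cases s.testBit q <;> simp

theorem forall_bitGadget_mem_truncParityPolytope_iff (hx : ∀ k, x k = 0 ∨ x k = 1)
    (hxs : ∑ k, x k = s) (m : ℕ) :
    (∀ q < m, bitGadget n q x z ∈ truncParityPolytope (n + 2 ^ (q + 1)) q) ↔
      ∀ k < m, z k = flippedBit s k := by
  induction m with
  | zero => simp
  | succ m ih =>
    simp only [Nat.lt_succ_iff_lt_or_eq, or_imp, forall_and, forall_eq, ih]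
    exact and_congr_right fun hz => bitGadget_mem_truncParityPolytope_iff hx hxs hz

end Gadget

theorem statement6_general (n : ℕ) (x : Fin n → ℝ) (hx : ∀ k, x k = 0 ∨ x k = 1) :
    (∃! z : Fin (Nat.size n) → ℝ,
        ∀ q, q < Nat.size n →
          bitGadget n q x (fun i => if h : i < Nat.size n then z ⟨i, h⟩ else 0) ∈
            truncParityPolytope (n + 2 ^ (q + 1)) q) ∧
    ∀ z : Fin (Nat.size n) → ℝ,
      (∀ q, q < Nat.size n →
          bitGadget n q x (fun i => if h : i < Nat.size n then z ⟨i, h⟩ else 0) ∈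
            truncParityPolytope (n + 2 ^ (q + 1)) q) →
      (∀ k, z k = 0 ∨ z k = 1) ∧
      (∑ k, x k) = ∑ k : Fin (Nat.size n), (1 - z k) * 2 ^ (k : ℕ) := by
  obtain ⟨s, hxs, hsn⟩ := exists_sum_eq_natCast_le_card hx
  rw [Fintype.card_fin] at hsn
  have hsol : ∀ z : Fin n.size → ℝ, (∀ q < n.size,
      bitGadget n q x (fun i => if h : i < n.size then z ⟨i, h⟩ else 0) ∈
        truncParityPolytope (n + 2 ^ (q + 1)) q) ↔ z = fun k : Fin n.size => flippedBit s k := by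
    intro z
    rw [forall_bitGadget_mem_truncParityPolytope_iff hx hxs, funext_iff, Fin.forall_iff]
    exact forall₂_congr fun k hk => by rw [dif_pos hk]
  refine ⟨⟨_, (hsol _).2 rfl, fun z hz => (hsol z).1 hz⟩, fun z hz => ?_⟩
  obtain rfl := (hsol z).1 hz
  refine ⟨fun k => flippedBit_eq_zero_or_one s k, ?_⟩
  rw [hxs, sum_fin_one_sub_flippedBit_mul_two_pow (hsn.trans_lt n.lt_size_self)]

/-- Let `n ≥ 1`, `m = |n|` (the number of bits of `n`) and let
`x_1,…,x_n ∈ {0,1}`.  Then there is a unique `(z_1,…,z_m) ∈ ℝ^m` such that for every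
`q = 0,…,m-1` the vector `(x, 1^{(2^q)}, z_1^{(1)},…,z_q^{(2^{q-1})}, 1-z_{q+1})` lies
in `PP(n+2^{q+1}, q)`; moreover in this solution each `z_k ∈ {0,1}` and
`Σ_k x_k = Σ_{k=1}^m (1 - z_k)·2^{k-1}`. -/
theorem statement6 (n : ℕ) (hn : 1 ≤ n) (x : Fin n → ℝ) (hx : ∀ k, x k = 0 ∨ x k = 1) :
    (∃! z : Fin (Nat.size n) → ℝ,
        ∀ q, q < Nat.size n →
          bitGadget n q x (fun i => if h : i < Nat.size n then z ⟨i, h⟩ else 0) ∈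
            truncParityPolytope (n + 2 ^ (q + 1)) q) ∧
    ∀ z : Fin (Nat.size n) → ℝ,
      (∀ q, q < Nat.size n →
          bitGadget n q x (fun i => if h : i < Nat.size n then z ⟨i, h⟩ else 0) ∈
            truncParityPolytope (n + 2 ^ (q + 1)) q) →
      (∀ k, z k = 0 ∨ z k = 1) ∧
      (∑ k, x k) = ∑ k : Fin (Nat.size n), (1 - z k) * 2 ^ (k : ℕ) :=
  statement6_general n x hx
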